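/- Let G be a finitely generated group with finite generating set S and Cayley graph X = Γ(G,S). If there exists a sequence of positive integers (r_i)_{i≥1} with r_i → ∞ such that the number of vertices |S(r_i)| of the sphere of radius r_i converges to a finite limit as i → ∞, then G is virtually cyclic, i.e. G has a cyclic subgroup of finite index. -/

import Mathlib

/-- The Cayley graph of a group `G` with respect to a generating set `S`. -/
def cayleyGraph {G : Type*} [Group G] (S : Set G) : SimpleGraph G where
  Adj x y := x ≠ y ∧ (x⁻¹ * y ∈ S ∨ y⁻¹ * x ∈ S)
  symm := ⟨fun x y h => ⟨h.1.symm, h.2.symm⟩⟩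
  loopless := ⟨fun x h => h.1 rfl⟩

/-- The sphere of radius `r` centered at the identity in the Cayley graph,
with respect to the word (graph) metric. -/
def cayleySphere {G : Type*} [Group G] (S : Set G) (r : ℕ) : Set G :=
  {x : G | (cayleyGraph S).dist 1 x = r}

/-!
Bounded spheres force linear growth, since `|B(k)| ≤ (2k + 1) |S(n)|` whenever `k ≤ n`.

An infinite such group has two ends. Inside each small sphere choose a minimal set cutting `1`
off from infinity; recentred, these cuts have bounded size, so along a subsequence they consist
of a fixed finite set `P` plus points escaping to infinity, and `P` already separates two
infinite components.

Two ends give an element of infinite order: an element far from `1` that is not joined to its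
inverse outside a ball pushes all of its powers into its own component. Finally, linear growth
bounds the number of cosets of `⟨g⟩` for such `g`: the products `q * g ^ k` of distinct coset
representatives `q` are distinct and fill a ball of linear size.
-/

open Set Pointwise

lemma Nat.exists_eq_of_le_add_one {f : ℕ → ℕ} {m t : ℕ} (hf : ∀ i < m, f (i + 1) ≤ f i + 1)
    (h0 : f 0 ≤ t) (hm : t ≤ f m) : ∃ i ≤ m, f i = t := by
  induction m with
  | zero => exact ⟨0, le_rfl, le_antisymm h0 hm⟩
  | succ m ih =>
    by_cases ht : t ≤ f m
    · obtain ⟨i, hi, hfi⟩ := ih (fun i hi => hf i (by omega)) ht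
      exact ⟨i, by omega, hfi⟩
    · exact ⟨m + 1, le_rfl, by have := hf m (by omega); omega⟩

lemma Set.Infinite.exists_infinite_inter_of_subset_biUnion {ι α : Type*} {A : Set α} {t : Set ι}
    {s : ι → Set α} (hA : A.Infinite) (ht : t.Finite) (hAs : A ⊆ ⋃ i ∈ t, s i) :
    ∃ i ∈ t, (A ∩ s i).Infinite := by
  by_contra! h
  refine hA ((ht.biUnion fun i hi => h i hi).subset fun a ha => ?_)
  obtain ⟨i, hi, hai⟩ := mem_iUnion₂.1 (hAs ha)
  exact mem_biUnion hi ⟨ha, hai⟩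

/-- Induction on `κ`: if infinitely many `N j` meet some finite set, then some point lies in
infinitely many `N j`; put it into `P` and remove it from the `N j`. -/
lemma Set.Infinite.exists_subset_fixed_part_escaping {ι X : Type*} {A : Set ι} (hA : A.Infinite)
    {N : ι → Set X} {κ : ℕ} (hN : ∀ j ∈ A, (N j).encard ≤ κ) :
    ∃ B ⊆ A, B.Infinite ∧ ∃ P : Set X, (∀ j ∈ B, P ⊆ N j) ∧
      ∀ K : Set X, K.Finite → {j ∈ B | (N j \ P ∩ K).Nonempty}.Finite := by
  induction κ generalizing A N with
  | zero =>
    refine ⟨A, subset_rfl, hA, ∅, by simp, fun K _ => (finite_empty).subset ?_⟩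
    rintro j ⟨hj, x, ⟨hx, -⟩, -⟩
    simp [encard_eq_zero.1 (nonpos_iff_eq_zero.1 (hN j hj))] at hx
  | succ κ ih =>
    by_cases h : ∀ K : Set X, K.Finite → {j ∈ A | (N j ∩ K).Nonempty}.Finite
    · exact ⟨A, subset_rfl, hA, ∅, by simp, by simpa using h⟩
    push Not at h
    obtain ⟨K, hK, hAK⟩ := h
    obtain ⟨x, -, hx⟩ := hAK.exists_infinite_inter_of_subset_biUnion hK
      (s := fun x => {j | x ∈ N j}) fun j ⟨_, y, hyN, hyK⟩ => mem_biUnion hyK hyN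
    obtain ⟨B, hB, hBinf, P, hPN, hesc⟩ := ih (A := {j ∈ A | x ∈ N j}) (N := fun j => N j \ {x})
      (hx.mono fun j hj => ⟨hj.1.1, hj.2⟩) fun j hj => by
        have h := (encard_sdiff_singleton_add_one hj.2).trans_le (hN j hj.1)
        push_cast at h
        exact (ENat.add_le_add_iff_right ENat.one_ne_top).1 h
    refine ⟨B, fun j hj => (hB hj).1, hBinf, insert x P,
      fun j hj => insert_subset (hB hj).2 ((hPN j hj).trans sdiff_subset), fun K hK => ?_⟩
    refine (hesc K hK).subset ?_
    rintro j ⟨hj, y, ⟨hyN, hyP⟩, hyK⟩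
    exact ⟨hj, y, ⟨⟨hyN, fun h => hyP (.inl h)⟩, fun h => hyP (.inr h)⟩, hyK⟩

namespace SimpleGraph

variable {V W : Type*} {Γ : SimpleGraph V}

lemma Walk.dist_add_dist_le_length {a b u : V} (p : Γ.Walk a b) (hu : u ∈ p.support) :
    Γ.dist a u + Γ.dist u b ≤ p.length := by
  classical
  calc Γ.dist a u + Γ.dist u b ≤ (p.takeUntil u hu).length + (p.dropUntil u hu).length :=
        add_le_add (dist_le _) (dist_le _)
    _ = p.length := by rw [← Walk.length_append, Walk.take_spec]

lemma Walk.exists_dist_getVert_eq {a b : V} (p : Γ.Walk a b) (u : V) {t : ℕ}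
    (ha : Γ.dist u a ≤ t) (hb : t ≤ Γ.dist u b) : ∃ i ≤ p.length, Γ.dist u (p.getVert i) = t :=
  Nat.exists_eq_of_le_add_one
    (fun i hi => by rcases (p.adj_getVert_succ hi).diff_dist_adj (u := u) with h | h | h <;> omega)
    (by simpa using ha) (by simpa using hb)

def ReachableAvoiding (Γ : SimpleGraph V) (F : Set V) (x y : V) : Prop :=
  ∃ p : Γ.Walk x y, ∀ v ∈ p.support, v ∉ F

namespace ReachableAvoiding

variable {F F' : Set V} {x y z : V}

lemma notMem_right (h : Γ.ReachableAvoiding F x y) : y ∉ F :=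
  h.elim fun p hp => hp y p.end_mem_support

protected lemma refl (hx : x ∉ F) : Γ.ReachableAvoiding F x x :=
  ⟨.nil, by simpa using hx⟩

protected lemma symm (h : Γ.ReachableAvoiding F x y) : Γ.ReachableAvoiding F y x := by
  obtain ⟨p, hp⟩ := h
  exact ⟨p.reverse, by simpa using hp⟩

protected lemma trans (h : Γ.ReachableAvoiding F x y) (h' : Γ.ReachableAvoiding F y z) :
    Γ.ReachableAvoiding F x z := by
  obtain ⟨p, hp⟩ := h
  obtain ⟨q, hq⟩ := h'
  refine ⟨p.append q, fun v hv => ?_⟩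
  rcases (Walk.mem_support_append_iff p q).1 hv with hv | hv
  exacts [hp v hv, hq v hv]

lemma mono (hF : F' ⊆ F) (h : Γ.ReachableAvoiding F x y) : Γ.ReachableAvoiding F' x y := by
  obtain ⟨p, hp⟩ := h
  exact ⟨p, fun v hv hvF => hp v hv (hF hvF)⟩

lemma map {Γ' : SimpleGraph W} (φ : Γ ≃g Γ') (h : Γ.ReachableAvoiding F x y) :
    Γ'.ReachableAvoiding (φ '' F) (φ x) (φ y) := by
  obtain ⟨p, hp⟩ := h
  refine ⟨p.map φ.toHom, fun v hv => ?_⟩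
  rw [Walk.support_map, List.mem_map] at hv
  obtain ⟨u, hu, rfl⟩ := hv
  rintro ⟨u', hu', hu'u⟩
  exact hp u hu (φ.injective hu'u ▸ hu')

end ReachableAvoiding

lemma reachableAvoiding_map_iff {Γ' : SimpleGraph W} (φ : Γ ≃g Γ') {F : Set V} {x y : V} :
    Γ'.ReachableAvoiding (φ '' F) (φ x) (φ y) ↔ Γ.ReachableAvoiding F x y := by
  refine ⟨fun h => ?_, .map φ⟩
  simpa [image_image] using h.map φ.symm

lemma setOf_reachableAvoiding_map {Γ' : SimpleGraph W} (φ : Γ ≃g Γ') (F : Set V) (x : V) :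
    {v | Γ'.ReachableAvoiding (φ '' F) (φ x) v} = φ '' {v | Γ.ReachableAvoiding F x v} := by
  ext v
  obtain ⟨u, rfl⟩ := φ.surjective v
  simp [reachableAvoiding_map_iff, φ.injective.eq_iff]

/-- Along a walk avoiding `O`, take the dart leaving the component of `x` in `Γ - (C ∪ O)`. -/
lemma exists_adj_of_not_reachableAvoiding_union {C O : Set V} {x y : V}
    (hxy : Γ.ReachableAvoiding O x y) (hx : x ∉ C) (h : ¬ Γ.ReachableAvoiding (C ∪ O) x y) :
    ∃ c ∈ C, ∃ a, Γ.Adj c a ∧ Γ.ReachableAvoiding (C ∪ O) x a := by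
  obtain ⟨p, hp⟩ := hxy
  obtain ⟨d, hd, hd₁, hd₂⟩ := p.exists_boundary_dart {v | Γ.ReachableAvoiding (C ∪ O) x v}
    (.refl (by simp [hx, hp x p.start_mem_support])) h
  have hd₁' : Γ.ReachableAvoiding (C ∪ O) x d.fst := hd₁
  refine ⟨d.snd, by_contra fun hC => hd₂ (hd₁'.trans ⟨Walk.cons d.adj .nil, ?_⟩), d.fst,
    d.adj.symm, hd₁⟩
  simpa [hC, hp _ (p.dart_snd_mem_support_of_mem_darts hd)] using hd₁'.notMem_right

def IsMinimalCut (Γ : SimpleGraph V) (T : Set V) (x : V) : Prop :=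
  {v | Γ.ReachableAvoiding T x v}.Finite ∧
    ∀ u ∈ T, {v | Γ.ReachableAvoiding (T \ {u}) x v}.Infinite

lemma exists_isMinimalCut_subset {T₀ : Set V} {x : V} (hT₀ : T₀.Finite)
    (h : {v | Γ.ReachableAvoiding T₀ x v}.Finite) : ∃ T ⊆ T₀, Γ.IsMinimalCut T x := by
  set 𝒞 := {T | T ⊆ T₀ ∧ {v | Γ.ReachableAvoiding T x v}.Finite}
  obtain ⟨T, hT⟩ := (hT₀.finite_subsets.subset fun T hT => hT.1).exists_minimal
    (⟨T₀, subset_rfl, h⟩ : 𝒞.Nonempty)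
  refine ⟨T, hT.prop.1, hT.prop.2, fun u hu hfin => ?_⟩
  exact hT.not_prop_of_lt (sdiff_singleton_ssubset.2 hu) ⟨sdiff_subset.trans hT.prop.1, hfin⟩

lemma IsMinimalCut.map {Γ' : SimpleGraph W} (φ : Γ ≃g Γ') {T : Set V} {x : V}
    (h : Γ.IsMinimalCut T x) : Γ'.IsMinimalCut (φ '' T) (φ x) := by
  refine ⟨?_, ?_⟩
  · rw [setOf_reachableAvoiding_map]
    exact h.1.image _
  · rintro _ ⟨u, hu, rfl⟩
    rw [← image_singleton, ← image_sdiff φ.injective, setOf_reachableAvoiding_map]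
    exact (h.2 u hu).image φ.injective.injOn

/-- By minimality, `q` reaches vertices `w` outside any finite `K` while avoiding `N \ P`, though
not while avoiding `N`; the first and the last visit to `P` of such a walk yield `a` and `b`. -/
lemma IsMinimalCut.exists_boundary_pair {N P K : Set V} {q : V} (hN : Γ.IsMinimalCut N q)
    (hPN : P ⊆ N) (hP : P.Finite) (hPne : P.Nonempty) (hq : q ∉ P) (hK : K.Finite) :
    ∃ a b w, (∃ c ∈ P, Γ.Adj c a) ∧ (∃ c ∈ P, Γ.Adj c b) ∧ w ∉ K ∧
      Γ.ReachableAvoiding N q a ∧ Γ.ReachableAvoiding N w b ∧ ¬ Γ.ReachableAvoiding N q w := by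
  obtain ⟨u, hu⟩ := hPne
  have hfar : ({v | Γ.ReachableAvoiding (N \ P) q v} \ {v | Γ.ReachableAvoiding N q v}).Infinite :=
    ((hN.2 u (hPN hu)).mono fun v hv => hv.mono (sdiff_subset_sdiff_right (by simpa))).sdiff hN.1
  obtain ⟨w, ⟨hqw, hqw'⟩, hwKP⟩ := hfar.exists_notMem_finite (hK.union hP)
  rw [mem_ofPred_eq, ← union_sdiff_cancel hPN] at hqw'
  obtain ⟨c, hc, a, hca, hqa⟩ := exists_adj_of_not_reachableAvoiding_union hqw hq hqw'
  obtain ⟨c', hc', b, hcb, hwb⟩ := exists_adj_of_not_reachableAvoiding_union hqw.symm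
    (fun h => hwKP (.inr h)) (fun h => hqw' h.symm)
  rw [union_sdiff_cancel hPN] at hqa hwb hqw'
  exact ⟨a, b, w, ⟨c, hc, hca⟩, ⟨c', hc', hcb⟩, fun h => hwKP (.inl h), hqa, hwb, hqw'⟩

end SimpleGraph

section CayleyGraph

open SimpleGraph

variable {G : Type*} [Group G] {S : Set G}

noncomputable def wordNorm (S : Set G) (x : G) : ℕ := (cayleyGraph S).dist 1 x

def wordBall (S : Set G) (n : ℕ) : Set G := {x | wordNorm S x ≤ n}

lemma mem_cayleySphere {x : G} {n : ℕ} : x ∈ cayleySphere S n ↔ wordNorm S x = n := Iff.rfl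

lemma wordNorm_one : wordNorm S 1 = 0 := dist_self

lemma wordNorm_le_of_adj {x y : G} (h : (cayleyGraph S).Adj x y) :
    wordNorm S y ≤ wordNorm S x + 1 := by
  rcases h.diff_dist_adj (u := 1) with h | h | h <;> unfold wordNorm <;> omega

lemma cayleyGraph_adj_inv_mul_mem {x y : G} (h : (cayleyGraph S).Adj x y) :
    x⁻¹ * y ∈ S ∪ S⁻¹ :=
  h.2.imp id fun h => by simpa using h

lemma inv_mul_mem_pow_of_walk {x y : G} (p : (cayleyGraph S).Walk x y) :
    x⁻¹ * y ∈ (insert 1 (S ∪ S⁻¹)) ^ p.length := by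
  induction p with
  | nil => simp
  | cons h p ih =>
    rw [Walk.length_cons, pow_succ']
    exact ⟨_, mem_insert_of_mem _ (cayleyGraph_adj_inv_mul_mem h), _, ih, by group⟩

def cayleyGraphMulLeft (S : Set G) (g : G) : cayleyGraph S ≃g cayleyGraph S where
  toEquiv := Equiv.mulLeft g
  map_rel_iff' := by simp [cayleyGraph, mul_assoc]

@[simp]
lemma cayleyGraphMulLeft_apply (g x : G) : cayleyGraphMulLeft S g x = g * x := rfl

lemma image_cayleyGraphMulLeft (g : G) (F : Set G) : cayleyGraphMulLeft S g '' F = g • F :=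
  show (g • ·) '' F = g • F from image_smul

lemma SimpleGraph.ReachableAvoiding.smul {F : Set G} {x y : G} (g : G)
    (h : (cayleyGraph S).ReachableAvoiding F x y) :
    (cayleyGraph S).ReachableAvoiding (g • F) (g * x) (g * y) := by
  simpa [image_cayleyGraphMulLeft] using h.map (cayleyGraphMulLeft S g)

lemma cayleyGraph_reachable_one (hgen : Subgroup.closure S = ⊤) (x : G) :
    (cayleyGraph S).Reachable 1 x := by
  have hx : x ∈ Subgroup.closure S := hgen ▸ Subgroup.mem_top x
  induction hx using Subgroup.closure_induction with
  | mem s hs =>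
    by_cases h : (1 : G) = s
    · exact h ▸ .rfl
    · exact Adj.reachable ⟨h, .inl (by simpa using hs)⟩
  | one => rfl
  | mul a b _ _ ha hb => exact ha.trans (by simpa using hb.map (cayleyGraphMulLeft S a).toHom)
  | inv a _ ha => exact (by simpa using ha.map (cayleyGraphMulLeft S a⁻¹).toHom :
      (cayleyGraph S).Reachable a⁻¹ 1).symm

variable (hgen : Subgroup.closure S = ⊤)
include hgen

lemma cayleyGraph_connected : (cayleyGraph S).Connected :=
  (connected_iff_exists_forall_reachable _).2 ⟨1, cayleyGraph_reachable_one hgen⟩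

lemma cayleyGraph_dist_mul_left (g x y : G) :
    (cayleyGraph S).dist (g * x) (g * y) = (cayleyGraph S).dist x y := by
  have key : ∀ g x y : G, (cayleyGraph S).dist (g * x) (g * y) ≤ (cayleyGraph S).dist x y := by
    intro g x y
    obtain ⟨p, hp⟩ := (cayleyGraph_connected hgen).exists_walk_length_eq_dist x y
    have := dist_le (p.map (cayleyGraphMulLeft S g).toHom)
    rwa [Walk.length_map, hp] at this
  refine le_antisymm (key g x y) ?_
  simpa using key g⁻¹ (g * x) (g * y)

lemma cayleyGraph_dist_eq_wordNorm (x y : G) :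
    (cayleyGraph S).dist x y = wordNorm S (x⁻¹ * y) := by
  rw [wordNorm, ← cayleyGraph_dist_mul_left hgen x⁻¹, inv_mul_cancel]

lemma wordNorm_inv (x : G) : wordNorm S x⁻¹ = wordNorm S x := by
  rw [wordNorm, dist_comm, cayleyGraph_dist_eq_wordNorm hgen, inv_inv, mul_one]

lemma wordNorm_mul_le (x y : G) : wordNorm S (x * y) ≤ wordNorm S x + wordNorm S y := by
  calc wordNorm S (x * y) ≤ (cayleyGraph S).dist 1 x + (cayleyGraph S).dist x (x * y) :=
        (cayleyGraph_connected hgen).dist_triangle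
    _ = wordNorm S x + wordNorm S y := by
        rw [cayleyGraph_dist_eq_wordNorm hgen x, inv_mul_cancel_left]; rfl

lemma wordNorm_pow_le (g : G) (k : ℕ) : wordNorm S (g ^ k) ≤ k * wordNorm S g := by
  induction k with
  | zero => simp [wordNorm_one]
  | succ k ih =>
    rw [pow_succ, add_one_mul]
    exact (wordNorm_mul_le hgen _ _).trans (by omega)

lemma wordBall_subset_pow (n : ℕ) : wordBall S n ⊆ (insert 1 (S ∪ S⁻¹)) ^ n := fun x hx => by
  obtain ⟨p, hp⟩ := (cayleyGraph_connected hgen).exists_walk_length_eq_dist 1 x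
  exact pow_subset_pow_right (mem_insert _ _) (hp.trans_le hx)
    (by simpa using inv_mul_mem_pow_of_walk p)

variable (hS : S.Finite)
include hS

lemma wordBall_finite (n : ℕ) : (wordBall S n).Finite := by
  refine Finite.subset ?_ (wordBall_subset_pow hgen n)
  induction n with
  | zero => simp
  | succ n ih => rw [pow_succ]; exact ih.mul ((hS.union hS.inv).insert 1)

lemma cayleySphere_finite (n : ℕ) : (cayleySphere S n).Finite :=
  (wordBall_finite hgen hS n).subset fun _ hx => hx.le

lemma infinite_iff_forall_exists_lt_wordNorm {A : Set G} :
    A.Infinite ↔ ∀ m, ∃ x ∈ A, m < wordNorm S x := by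
  refine ⟨fun hA m => ?_, fun h => ?_⟩
  · obtain ⟨x, hxA, hx⟩ := hA.exists_notMem_finite (wordBall_finite hgen hS m)
    exact ⟨x, hxA, not_le.1 hx⟩
  · refine Infinite.of_image (wordNorm S) (infinite_of_forall_exists_gt fun m => ?_)
    obtain ⟨x, hxA, hx⟩ := h m
    exact ⟨_, mem_image_of_mem _ hxA, hx⟩

lemma cayleySphere_nonempty [Infinite G] (n : ℕ) : (cayleySphere S n).Nonempty := by
  obtain ⟨y, -, hy⟩ := (infinite_iff_forall_exists_lt_wordNorm hgen hS).1 infinite_univ n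
  obtain ⟨p⟩ := cayleyGraph_reachable_one hgen y
  obtain ⟨i, -, hi⟩ := p.exists_dist_getVert_eq 1 (t := n) (by simp) hy.le
  exact ⟨_, hi⟩

end CayleyGraph

section Growth

open SimpleGraph

variable {G : Type*} [Group G] {S : Set G} (hgen : Subgroup.closure S = ⊤) (hS : S.Finite)
include hgen hS

/-- Each `u` of norm `≤ k` lies at distance exactly `n` from some vertex of a geodesic from `1`
to a point of norm `n + k`, and that vertex is among the `2k + 1` vertices at positions
`n - k, …, n + k`. -/
lemma ncard_wordBall_le [Infinite G] {k n : ℕ} (hkn : k ≤ n) :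
    (wordBall S k).ncard ≤ (2 * k + 1) * (cayleySphere S n).ncard := by
  obtain ⟨y, hy⟩ := cayleySphere_nonempty hgen hS (n + k)
  have hconn := cayleyGraph_connected hgen
  obtain ⟨p, hp⟩ := hconn.exists_walk_length_eq_dist 1 y
  have hlen : p.length = n + k := hp.trans hy
  have hcover : wordBall S k ⊆
      ⋃ i ∈ Finset.Icc (n - k) (n + k), p.getVert i • cayleySphere S n := by
    intro u (hu : wordNorm S u ≤ k)
    have hu1 : (cayleyGraph S).dist u 1 = wordNorm S u := SimpleGraph.dist_comm
    have huy : n + k ≤ wordNorm S u + (cayleyGraph S).dist u y := hy ▸ hconn.dist_triangle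
    obtain ⟨i, hi, hui⟩ := p.exists_dist_getVert_eq u (t := n) (by omega) (by omega)
    have hui' := hconn.dist_triangle (u := u) (v := 1) (w := p.getVert i)
    have hpi : (cayleyGraph S).dist 1 (p.getVert i) ≤ i := (dist_le (p.take i)).trans (by simp)
    refine Set.mem_biUnion (x := i) (Finset.mem_coe.2 (Finset.mem_Icc.2 ⟨by omega, by omega⟩))
      ⟨(p.getVert i)⁻¹ * u, ?_, by simp⟩
    rw [mem_cayleySphere, ← cayleyGraph_dist_eq_wordNorm hgen, SimpleGraph.dist_comm, hui]
  calc (wordBall S k).ncard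
      ≤ (⋃ i ∈ Finset.Icc (n - k) (n + k), p.getVert i • cayleySphere S n).ncard :=
        Set.ncard_le_ncard hcover ((Finset.finite_toSet _).biUnion fun i _ =>
          (cayleySphere_finite hgen hS n).smul_set)
    _ ≤ ∑ i ∈ Finset.Icc (n - k) (n + k), (p.getVert i • cayleySphere S n).ncard :=
        Finset.set_ncard_biUnion_le _ _
    _ = (2 * k + 1) * (cayleySphere S n).ncard := by
        simp only [Set.ncard_smul_set, Finset.sum_const, Nat.card_Icc, smul_eq_mul]
        congr 1
        omega

lemma card_mul_le_ncard_wordBall {g : G} (hg : ¬IsOfFinOrder g)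
    (s : Finset (G ⧸ Subgroup.zpowers g)) {m : ℕ} (hm : ∀ q ∈ s, wordNorm S q.out ≤ m) :
    s.card * (m + 1) ≤ (wordBall S (m * (wordNorm S g + 1))).ncard := by
  have hinj : Set.InjOn (fun p : (G ⧸ Subgroup.zpowers g) × ℕ => p.1.out * g ^ p.2)
      (s ×ˢ Finset.range (m + 1) : Finset _) := by
    rintro ⟨q, k⟩ - ⟨q', k'⟩ - h
    have hq : q = q' := by
      simpa [QuotientGroup.mk_mul_of_mem _ (Subgroup.npow_mem_zpowers g _)] using
        congrArg (QuotientGroup.mk (s := Subgroup.zpowers g)) h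
    subst hq
    simpa using injective_pow_iff_not_isOfFinOrder.2 hg (mul_left_cancel h)
  rw [← Finset.card_range (m + 1), ← Finset.card_product, ← Set.ncard_coe_finset]
  refine Set.ncard_le_ncard_of_injOn _ ?_ hinj (wordBall_finite hgen hS _)
  rintro ⟨q, k⟩ hqk
  simp only [Finset.coe_product, Set.mem_prod, Finset.mem_coe, Finset.mem_range] at hqk
  calc wordNorm S (q.out * g ^ k) ≤ m + k * wordNorm S g :=
        (wordNorm_mul_le hgen _ _).trans (add_le_add (hm q hqk.1) (wordNorm_pow_le hgen g k))
    _ ≤ m * (wordNorm S g + 1) := by nlinarith [hqk.2]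

lemma finiteIndex_zpowers_of_ncard_wordBall_le {g : G} (hg : ¬IsOfFinOrder g) {L : ℕ}
    (hL : ∀ k, (wordBall S k).ncard ≤ (2 * k + 1) * L) : (Subgroup.zpowers g).FiniteIndex := by
  rcases finite_or_infinite (G ⧸ Subgroup.zpowers g) with h | h
  · exact Subgroup.finiteIndex_of_finite_quotient
  obtain ⟨s, hs⟩ := Infinite.exists_subset_card_eq (G ⧸ Subgroup.zpowers g)
    ((2 * wordNorm S g + 3) * L + 1)
  have := (card_mul_le_ncard_wordBall hgen hS hg s fun q hq =>
    Finset.le_sup (f := fun q => wordNorm S q.out) hq).trans (hL _)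
  rw [hs] at this
  nlinarith
  
end Growth

section Ends

open SimpleGraph

variable {G : Type*} [Group G] {S : Set G}

lemma wordNorm_lt_of_reachableAvoiding_cayleySphere {j : ℕ} {v : G}
    (h : (cayleyGraph S).ReachableAvoiding (cayleySphere S j) 1 v) : wordNorm S v < j := by
  obtain ⟨p, hp⟩ := h
  by_contra hv
  have hj : j ≠ 0 := fun hj =>
    hp 1 p.start_mem_support (by simp [mem_cayleySphere, wordNorm_one, hj])
  obtain ⟨d, hd, hd₁, hd₂⟩ := p.exists_boundary_dart {v | wordNorm S v < j}
    (show wordNorm S 1 < j by rw [wordNorm_one]; omega) hv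
  have := wordNorm_le_of_adj d.adj
  refine hp _ (p.dart_snd_mem_support_of_mem_darts hd) ?_
  simp only [mem_ofPred_eq, not_lt] at hd₁ hd₂
  rw [mem_cayleySphere]
  omega

variable (hgen : Subgroup.closure S = ⊤)
include hgen

lemma reachableAvoiding_wordBall_of_add_dist_lt {n : ℕ} {v x : G}
    (h : n + (cayleyGraph S).dist v x < wordNorm S x) :
    (cayleyGraph S).ReachableAvoiding (wordBall S n) v x := by
  have hconn := cayleyGraph_connected hgen
  obtain ⟨p, hp⟩ := hconn.exists_walk_length_eq_dist v x
  refine ⟨p, fun u hu (hun : wordNorm S u ≤ n) => ?_⟩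
  have h₁ := p.dist_add_dist_le_length hu
  have h₂ : wordNorm S x ≤ wordNorm S u + (cayleyGraph S).dist u x := hconn.dist_triangle
  omega

/-- Translate a geodesic from `1` to `x` by `g`: were it to meet `B(n)` at `g * u`, then `u`
would be joined outside `B(n)` both to `g⁻¹` and to `x`. -/
lemma reachableAvoiding_mul_of_not_reachableAvoiding_inv {n : ℕ} {g x : G}
    (hg : 2 * n + 2 ≤ wordNorm S g)
    (hx : ¬ (cayleyGraph S).ReachableAvoiding (wordBall S n) g⁻¹ x) :
    (cayleyGraph S).ReachableAvoiding (wordBall S n) g (g * x) := by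
  obtain ⟨p, hp⟩ := (cayleyGraph_connected hgen).exists_walk_length_eq_dist 1 x
  suffices (cayleyGraph S).ReachableAvoiding (g⁻¹ • wordBall S n) 1 x by
    simpa [smul_smul] using this.smul g
  refine ⟨p, fun u hu hgu => hx ?_⟩
  replace hgu : wordNorm S (g * u) ≤ n := mem_inv_smul_set_iff.1 hgu
  have h₁ : wordNorm S u + (cayleyGraph S).dist u x ≤ wordNorm S x :=
    (p.dist_add_dist_le_length hu).trans_eq hp
  have h₂ : wordNorm S g ≤ wordNorm S (g * u) + wordNorm S u := by
    simpa [wordNorm_inv hgen] using wordNorm_mul_le hgen (g * u) u⁻¹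
  have h₃ : (cayleyGraph S).dist u g⁻¹ = wordNorm S (g * u) := by
    rw [cayleyGraph_dist_eq_wordNorm hgen, ← mul_inv_rev, wordNorm_inv hgen]
  refine (reachableAvoiding_wordBall_of_add_dist_lt hgen (v := u) ?_).symm.trans
    (reachableAvoiding_wordBall_of_add_dist_lt hgen (v := u) ?_)
  · rw [h₃, wordNorm_inv hgen]
    omega
  · omega

lemma not_isOfFinOrder_of_not_reachableAvoiding_inv {n : ℕ} {g : G}
    (hg : 2 * n + 2 ≤ wordNorm S g)
    (h : ¬ (cayleyGraph S).ReachableAvoiding (wordBall S n) g g⁻¹) : ¬ IsOfFinOrder g := by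
  have hpow : ∀ k : ℕ, (cayleyGraph S).ReachableAvoiding (wordBall S n) g (g ^ (k + 1)) := by
    intro k
    induction k with
    | zero =>
      rw [zero_add, pow_one]
      exact .refl fun (h : wordNorm S g ≤ n) => by omega
    | succ k ih =>
      rw [pow_succ']
      exact reachableAvoiding_mul_of_not_reachableAvoiding_inv hgen hg
        fun h' => h (ih.trans h'.symm)
  rw [isOfFinOrder_iff_pow_eq_one]
  rintro ⟨k, hk, hgk⟩
  obtain ⟨k, rfl⟩ := Nat.exists_eq_add_of_lt hk
  rw [zero_add] at hgk
  exact (hpow k).notMem_right (by simp [hgk, wordBall, wordNorm_one])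

/-- Otherwise every far element is joined to its inverse outside `B(n)`, and the chain
`x ~ x * y ~ (x * y)⁻¹ ~ y⁻¹ ~ y` joins `x` to `y` outside `B(n)`. -/
lemma exists_not_isOfFinOrder_of_not_reachableAvoiding {n : ℕ} {x y : G}
    (hx : 2 * n + 2 ≤ wordNorm S x) (hy : wordNorm S x + (2 * n + 2) ≤ wordNorm S y)
    (hxy : ¬ (cayleyGraph S).ReachableAvoiding (wordBall S n) x y) :
    ∃ g : G, ¬ IsOfFinOrder g := by
  by_contra! hfin
  have hinv : ∀ h : G, 2 * n + 2 ≤ wordNorm S h →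
      (cayleyGraph S).ReachableAvoiding (wordBall S n) h h⁻¹ := fun h hh =>
    not_not.1 fun H => not_isOfFinOrder_of_not_reachableAvoiding_inv hgen hh H (hfin h)
  have hxy' : 2 * n + 2 ≤ wordNorm S (x * y) := by
    have := wordNorm_mul_le hgen x⁻¹ (x * y)
    rw [inv_mul_cancel_left, wordNorm_inv hgen] at this
    omega
  have h₁ := reachableAvoiding_mul_of_not_reachableAvoiding_inv hgen hx
    fun h => hxy ((hinv x hx).trans h)
  have h₂ := reachableAvoiding_mul_of_not_reachableAvoiding_inv hgen (n := n) (g := y⁻¹)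
    (x := x⁻¹) (by rw [wordNorm_inv hgen]; omega)
    (by rw [inv_inv]; exact fun h => hxy ((hinv x hx).trans h.symm))
  rw [← mul_inv_rev] at h₂
  exact hxy ((h₁.trans ((hinv _ hxy').trans h₂.symm)).trans (hinv y (by omega)).symm)

variable (hS : S.Finite)
include hS

lemma exists_far_not_reachableAvoiding_wordBall {P : Set G} (hP : P.Finite) {a b : G}
    (hab : ¬ (cayleyGraph S).ReachableAvoiding P a b)
    (ha : {v | (cayleyGraph S).ReachableAvoiding P a v}.Infinite)
    (hb : {v | (cayleyGraph S).ReachableAvoiding P b v}.Infinite) :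
    ∃ n x y, 2 * n + 2 ≤ wordNorm S x ∧ wordNorm S x + (2 * n + 2) ≤ wordNorm S y ∧
      ¬ (cayleyGraph S).ReachableAvoiding (wordBall S n) x y := by
  obtain ⟨n, hn⟩ := (hP.image (wordNorm S)).bddAbove
  obtain ⟨x, hax, hx⟩ := (infinite_iff_forall_exists_lt_wordNorm hgen hS).1 ha (2 * n + 2)
  obtain ⟨y, hby, hy⟩ :=
    (infinite_iff_forall_exists_lt_wordNorm hgen hS).1 hb (wordNorm S x + (2 * n + 2))
  refine ⟨n, x, y, hx.le, hy.le, fun hxy => hab ?_⟩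
  exact (hax.trans (hxy.mono fun p hp => hn (mem_image_of_mem _ hp))).trans hby.symm

lemma exists_isMinimalCut_of_cayleySphere [Infinite G] {j : ℕ} (hj : 1 ≤ j) :
    ∃ (N : Set G) (q : G), N.encard ≤ (cayleySphere S j).ncard ∧ 1 ∈ N ∧
      wordNorm S q = j ∧ q ∉ N ∧ (cayleyGraph S).IsMinimalCut N q := by
  obtain ⟨T, hTS, hT⟩ := exists_isMinimalCut_subset (cayleySphere_finite hgen hS j)
    ((wordBall_finite hgen hS j).subset fun v hv =>
      (wordNorm_lt_of_reachableAvoiding_cayleySphere hv).le)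
  obtain ⟨z, hz⟩ : T.Nonempty := by
    rw [nonempty_iff_ne_empty]
    rintro rfl
    refine infinite_univ (hT.1.subset fun v _ => ?_)
    obtain ⟨p⟩ := cayleyGraph_reachable_one hgen v
    exact ⟨p, by simp⟩
  have h1T : (1 : G) ∉ T := fun h1 => by
    have := hTS h1
    rw [mem_cayleySphere, wordNorm_one] at this
    omega
  refine ⟨z⁻¹ • T, z⁻¹, ?_, ⟨z, hz, inv_mul_cancel z⟩, (wordNorm_inv hgen z).trans (hTS hz),
    by simpa using (smul_mem_smul_set_iff (a := z⁻¹)).not.2 h1T, ?_⟩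
  · rw [encard_smul_set, (cayleySphere_finite hgen hS j).cast_ncard_eq]
    exact encard_le_encard hTS
  · simpa [image_cayleyGraphMulLeft] using hT.map (cayleyGraphMulLeft S z⁻¹)

/-- Recentre minimal cuts inside the small spheres so that they contain `1`. Along a subsequence
they split into a fixed part `P` and a part escaping to infinity, and the boundary pairs given by
`IsMinimalCut.exists_boundary_pair` stabilise at `a`, `b`. The component of `a` contains the
centres `q j`, that of `b` the far points `w j`, and a walk from `a` to `b` avoiding `P` would,
for large `j`, avoid the whole cut `N j`. -/
theorem exists_two_infinite_components [Infinite G] {L : ℕ}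
    (hA : {j | (cayleySphere S j).ncard ≤ L}.Infinite) :
    ∃ P : Set G, P.Finite ∧ ∃ a b, ¬ (cayleyGraph S).ReachableAvoiding P a b ∧
      {v | (cayleyGraph S).ReachableAvoiding P a v}.Infinite ∧
      {v | (cayleyGraph S).ReachableAvoiding P b v}.Infinite := by
  set A := {j | (cayleySphere S j).ncard ≤ L ∧ 1 ≤ j}
  have hA₁ : A.Infinite := (hA.sdiff (finite_singleton 0)).mono fun j hj =>
    ⟨hj.1, Nat.one_le_iff_ne_zero.2 hj.2⟩
  choose! N q hNL h1N hq hqN hcut using fun j (hj : j ∈ A) =>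
    exists_isMinimalCut_of_cayleySphere hgen hS hj.2
  obtain ⟨B, hBA, hB, P, hPN, hesc⟩ := hA₁.exists_subset_fixed_part_escaping (N := N)
    (κ := L) fun j hj => (hNL j hj).trans (by exact_mod_cast hj.1)
  have h1P : (1 : G) ∈ P := by
    by_contra h1P
    exact hB ((hesc {1} (finite_singleton 1)).subset fun j hj =>
      ⟨hj, 1, ⟨h1N j (hBA hj), h1P⟩, rfl⟩)
  obtain ⟨j₀, hj₀⟩ := hB.nonempty
  have hP : P.Finite :=
    finite_of_encard_le_coe ((encard_le_encard (hPN j₀ hj₀)).trans (hNL j₀ (hBA hj₀)))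
  have hpair : ∀ j ∈ B, ∃ a b w, a ∈ P * (S ∪ S⁻¹) ∧ b ∈ P * (S ∪ S⁻¹) ∧
      j < wordNorm S w ∧ (cayleyGraph S).ReachableAvoiding (N j) (q j) a ∧
      (cayleyGraph S).ReachableAvoiding (N j) w b ∧
      ¬ (cayleyGraph S).ReachableAvoiding (N j) (q j) w := by
    intro j hj
    obtain ⟨a, b, w, ⟨c, hc, hca⟩, ⟨c', hc', hcb⟩, hw, h⟩ :=
      (hcut j (hBA hj)).exists_boundary_pair (hPN j hj) hP ⟨1, h1P⟩
        (fun h => hqN j (hBA hj) (hPN j hj h)) (wordBall_finite hgen hS j)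
    exact ⟨a, b, w, ⟨c, hc, _, cayleyGraph_adj_inv_mul_mem hca, mul_inv_cancel_left c a⟩,
      ⟨c', hc', _, cayleyGraph_adj_inv_mul_mem hcb, mul_inv_cancel_left c' b⟩, not_le.1 hw, h⟩
  choose! a b w ha hb hw hqa hwb hqw using hpair
  have hnbhd := hP.mul (hS.union hS.inv)
  obtain ⟨⟨a₀, b₀⟩, -, hB₂⟩ := hB.exists_infinite_inter_of_subset_biUnion (hnbhd.prod hnbhd)
    (s := fun ab => {j | (a j, b j) = ab}) fun j hj =>
      mem_biUnion (x := (a j, b j)) ⟨ha j hj, hb j hj⟩ rfl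
  simp only [Prod.mk.injEq] at hB₂
  refine ⟨P, hP, a₀, b₀, ?_, ?_, ?_⟩
  · rintro ⟨W, hW⟩
    obtain ⟨j, ⟨hjB, hja, hjb⟩, hjW⟩ :=
      (hB₂.sdiff (hesc _ W.support.finite_toSet)).nonempty
    have hW' : (cayleyGraph S).ReachableAvoiding (N j) a₀ b₀ :=
      ⟨W, fun v hv hvN => hjW ⟨hjB, v, ⟨hvN, hW v hv⟩, hv⟩⟩
    exact hqw j hjB ((hja ▸ hqa j hjB).trans (hW'.trans (hjb ▸ hwb j hjB).symm))
  · refine (infinite_iff_forall_exists_lt_wordNorm hgen hS).2 fun m => ?_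
    obtain ⟨j, ⟨hjB, hja, -⟩, hjm⟩ := hB₂.exists_gt m
    exact ⟨q j, (hja ▸ hqa j hjB).symm.mono (hPN j hjB), (hq j (hBA hjB)).symm ▸ hjm⟩
  · refine (infinite_iff_forall_exists_lt_wordNorm hgen hS).2 fun m => ?_
    obtain ⟨j, ⟨hjB, -, hjb⟩, hjm⟩ := hB₂.exists_gt m
    exact ⟨w j, (hjb ▸ hwb j hjB).symm.mono (hPN j hjB), hjm.trans (hw j hjB)⟩

end Ends

theorem virtually_cyclic_of_bounded_spheres_general {G : Type*} [Group G] (S : Set G) (hS : S.Finite)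
    (hgen : Subgroup.closure S = ⊤) (r : ℕ → ℕ)
    (hr : Filter.Tendsto r Filter.atTop Filter.atTop)
    (hlim : ∃ L : ℕ, Filter.Tendsto (fun i => (cayleySphere S (r i)).ncard)
      Filter.atTop (nhds L)) :
    ∃ H : Subgroup G, IsCyclic H ∧ H.FiniteIndex := by
  rcases finite_or_infinite G with hG | hG
  · exact ⟨⊥, inferInstance, inferInstance⟩
  obtain ⟨L, hL⟩ := hlim
  have hA : {j | (cayleySphere S j).ncard ≤ L}.Infinite := by
    refine infinite_of_forall_exists_gt fun m => ?_
    obtain ⟨i, hi, hiL⟩ := ((hr.eventually_gt_atTop m).and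
      (hL (isOpen_discrete {L} |>.mem_nhds rfl))).exists
    exact ⟨r i, le_of_eq hiL, hi⟩
  obtain ⟨P, hP, a, b, hab, ha, hb⟩ := exists_two_infinite_components hgen hS hA
  obtain ⟨n, x, y, hx, hy, hxy⟩ :=
    exists_far_not_reachableAvoiding_wordBall hgen hS hP hab ha hb
  obtain ⟨g, hg⟩ := exists_not_isOfFinOrder_of_not_reachableAvoiding hgen hx hy hxy
  refine ⟨Subgroup.zpowers g, inferInstance,
    finiteIndex_zpowers_of_ncard_wordBall_le hgen hS hg (L := L) fun k => ?_⟩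
  obtain ⟨j, hj, hkj⟩ := hA.exists_gt k
  exact (ncard_wordBall_le hgen hS hkj.le).trans (Nat.mul_le_mul_left _ hj)

/-- If there is a sequence of positive integers `rᵢ → ∞` such that the sizes `|S(rᵢ)|`
of the spheres of radius `rᵢ` converge to a finite limit, then `G` is virtually cyclic. -/
theorem virtually_cyclic_of_bounded_spheres {G : Type*} [Group G] (S : Set G) (hS : S.Finite)
    (hgen : Subgroup.closure S = ⊤) (r : ℕ → ℕ) (hrpos : ∀ i, 0 < r i)
    (hr : Filter.Tendsto r Filter.atTop Filter.atTop)
    (hlim : ∃ L : ℕ, Filter.Tendsto (fun i => (cayleySphere S (r i)).ncard)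
      Filter.atTop (nhds L)) :
    ∃ H : Subgroup G, IsCyclic H ∧ H.FiniteIndex :=
  virtually_cyclic_of_bounded_spheres_general S hS hgen r hr hlim
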